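/- arXiv:1405.7208 — 2 statements merged into one kernel-verified Lean document; each statement's English description precedes it below -/
import Mathlib

section
/- For every natural number n ≥ 1, cof([ℵ_n]^ℵ₀) = ℵ_n. -/
open Set Filter

universe u

/-- Least cardinality of a cofinal subset of a preorder. -/
noncomputable def poCof (α : Type u) [Preorder α] : Cardinal.{u} :=
  sInf { c | ∃ S : Set α, (∀ a : α, ∃ b ∈ S, a ≤ b) ∧ Cardinal.mk S = c }

/-- `cof([X]^ℵ₀)`: cofinality of the family of countably infinite subsets of `X`,
ordered by inclusion. -/
noncomputable def ctblCof (X : Type u) : Cardinal.{u} :=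
  poCof { A : Set X // A.Countable ∧ A.Infinite }

/-- The dominating number 𝔡. -/
noncomputable def dNum : Cardinal :=
  sInf { c | ∃ D : Set (ℕ → ℕ),
    (∀ f : ℕ → ℕ, ∃ g ∈ D, ∀ᶠ n in atTop, f n ≤ g n) ∧ Cardinal.mk D = c }

/-- The unbounding number 𝔟. -/
noncomputable def bNum : Cardinal :=
  sInf { c | ∃ B : Set (ℕ → ℕ),
    (∀ g : ℕ → ℕ, ∃ f ∈ B, ¬ ∀ᶠ n in atTop, f n ≤ g n) ∧ Cardinal.mk B = c }

/-- An almost disjoint family on ℕ. -/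
def AlmostDisjoint (𝒜 : Set (Set ℕ)) : Prop :=
  (∀ A ∈ 𝒜, A.Infinite) ∧ ∀ A ∈ 𝒜, ∀ B ∈ 𝒜, A ≠ B → (A ∩ B).Finite

/-- The underlying set of the Isbell–Mrówka space `Ψ(𝒜) = ℕ ∪ 𝒜`. -/
abbrev PsiSpace (𝒜 : Set (Set ℕ)) : Type := ℕ ⊕ ↥𝒜

/-- The Isbell–Mrówka topology: naturals are isolated, and basic neighborhoods
of `A ∈ 𝒜` are `{A} ∪ (A \ F)` for finite `F`. -/
instance psiTop (𝒜 : Set (Set ℕ)) : TopologicalSpace (PsiSpace 𝒜) where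
  IsOpen U := ∀ A : 𝒜, Sum.inr A ∈ U → { n : ℕ | n ∈ (A : Set ℕ) ∧ Sum.inl n ∉ U }.Finite
  isOpen_univ := by
    intro A _
    convert Set.finite_empty using 1
    ext n; simp
  isOpen_inter := by
    intro U V hU hV A hA
    apply ((hU A hA.1).union (hV A hA.2)).subset
    rintro n ⟨h1, h2⟩
    by_cases h : Sum.inl n ∈ U
    · exact Or.inr ⟨h1, fun hv => h2 ⟨h, hv⟩⟩
    · exact Or.inl ⟨h1, h⟩
  isOpen_sUnion := by
    intro s hs A hA
    obtain ⟨t, ht, hAt⟩ := hA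
    apply (hs t ht A hAt).subset
    rintro n ⟨h1, h2⟩
    exact ⟨h1, fun h => h2 ⟨t, ht, h⟩⟩

/-- `st(S, 𝒰) = ⋃ {U ∈ 𝒰 : U ∩ S ≠ ∅}`. -/
def starSet {X : Type*} (S : Set X) (𝒰 : Set (Set X)) : Set X :=
  ⋃₀ { U ∈ 𝒰 | (U ∩ S).Nonempty }

def StarMenger (X : Type*) [TopologicalSpace X] : Prop :=
  ∀ 𝒰 : ℕ → Set (Set X), (∀ n, ∀ U ∈ 𝒰 n, IsOpen U) → (∀ n, ⋃₀ 𝒰 n = univ) →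
    ∃ ℱ : ℕ → Set (Set X), (∀ n, ℱ n ⊆ 𝒰 n ∧ (ℱ n).Finite) ∧
      (⋃ n, starSet (⋃₀ ℱ n) (𝒰 n)) = univ

def StarHurewicz (X : Type*) [TopologicalSpace X] : Prop :=
  ∀ 𝒰 : ℕ → Set (Set X), (∀ n, ∀ U ∈ 𝒰 n, IsOpen U) → (∀ n, ⋃₀ 𝒰 n = univ) →
    ∃ ℱ : ℕ → Set (Set X), (∀ n, ℱ n ⊆ 𝒰 n ∧ (ℱ n).Finite) ∧
      ∀ x : X, ∀ᶠ n in atTop, x ∈ starSet (⋃₀ ℱ n) (𝒰 n)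

def StarRothberger (X : Type*) [TopologicalSpace X] : Prop :=
  ∀ 𝒰 : ℕ → Set (Set X), (∀ n, ∀ U ∈ 𝒰 n, IsOpen U) → (∀ n, ⋃₀ 𝒰 n = univ) →
    ∃ U : ℕ → Set X, (∀ n, U n ∈ 𝒰 n) ∧ (⋃ n, starSet (U n) (𝒰 n)) = univ

def StronglyStarMenger (X : Type*) [TopologicalSpace X] : Prop :=
  ∀ 𝒰 : ℕ → Set (Set X), (∀ n, ∀ U ∈ 𝒰 n, IsOpen U) → (∀ n, ⋃₀ 𝒰 n = univ) →
    ∃ F : ℕ → Set X, (∀ n, (F n).Finite) ∧ (⋃ n, starSet (F n) (𝒰 n)) = univ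

def StronglyStarHurewicz (X : Type*) [TopologicalSpace X] : Prop :=
  ∀ 𝒰 : ℕ → Set (Set X), (∀ n, ∀ U ∈ 𝒰 n, IsOpen U) → (∀ n, ⋃₀ 𝒰 n = univ) →
    ∃ F : ℕ → Set X, (∀ n, (F n).Finite) ∧
      ∀ x : X, ∀ᶠ n in atTop, x ∈ starSet (F n) (𝒰 n)

/-!
A cofinal family in `[X]^ℵ₀` covers `X` by countable sets, so for uncountable `X` it has at least
`#X` members. Conversely, by induction on `n`, every set of size at most `ℵ_n` has a family of at
most `ℵ_n` countable sets cofinal among its countable subsets: since `ℵ_{n+1}` is regular, each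
countable subset of `ℵ_{n+1}` is bounded, hence lies in an initial segment of size at most `ℵ_n`,
and taking the families of all `ℵ_{n+1}` initial segments together costs `ℵ_{n+1} · ℵ_n = ℵ_{n+1}`.
Padding each member with a fixed countably infinite set turns such a family into a cofinal subset
of `[X]^ℵ₀`.
-/

open Cardinal Order

theorem poCof_eq_cof (α : Type u) [Preorder α] : poCof α = Order.cof α := by
  rw [poCof, Order.cof, iInf]
  congr 1
  ext c
  simp [IsCofinal]

theorem exists_forall_lt_of_countable {α : Type*} [LinearOrder α] (hα : ℵ₀ < Order.cof α)
    {s : Set α} (hs : s.Countable) : ∃ a, ∀ x ∈ s, x < a :=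
  not_isCofinal_iff.1 fun h => (cof_le h).not_gt (hs.le_aleph0.trans_lt hα)

section

variable {X Y : Type*}

def IsCountableCofinal (S : Set (Set X)) : Prop :=
  (∀ s ∈ S, s.Countable) ∧ ∀ A : Set X, A.Countable → ∃ B ∈ S, A ⊆ B

theorem IsCountableCofinal.preimage {S : Set (Set Y)} (hS : IsCountableCofinal S) {f : X → Y}
    (hf : Function.Injective f) : IsCountableCofinal ((f ⁻¹' ·) '' S) := by
  refine ⟨?_, fun A hA => ?_⟩
  · rintro _ ⟨B, hB, rfl⟩
    exact (hS.1 B hB).preimage hf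
  · obtain ⟨B, hB, hAB⟩ := hS.2 (f '' A) (hA.image f)
    exact ⟨f ⁻¹' B, mem_image_of_mem _ hB, image_subset_iff.mp hAB⟩

theorem isCountableCofinal_iUnion_Iio {α : Type*} [LinearOrder α] (hα : ℵ₀ < Order.cof α)
    {S : ∀ a : α, Set (Set (Iio a))} (hS : ∀ a, IsCountableCofinal (S a)) :
    IsCountableCofinal (⋃ a, (Subtype.val '' ·) '' S a) := by
  refine ⟨?_, fun A hA => ?_⟩
  · simp only [mem_iUnion, mem_image]
    rintro _ ⟨a, B, hB, rfl⟩
    exact ((hS a).1 B hB).image _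
  · obtain ⟨a, ha⟩ := exists_forall_lt_of_countable hα hA
    obtain ⟨B, hB, hAB⟩ := (hS a).2 (Subtype.val ⁻¹' A) (hA.preimage Subtype.val_injective)
    refine ⟨Subtype.val '' B, mem_iUnion.2 ⟨a, mem_image_of_mem _ hB⟩, fun x hx => ?_⟩
    exact ⟨⟨x, ha x hx⟩, hAB hx, rfl⟩

theorem exists_isCountableCofinal_mk_le_aleph_nat (n : ℕ) (hX : #X ≤ ℵ_ n) :
    ∃ S : Set (Set X), IsCountableCofinal S ∧ #S ≤ ℵ_ n := by
  induction n generalizing X with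
  | zero =>
    have : Countable X := mk_le_aleph0_iff.1 (by simpa using hX)
    refine ⟨{Set.univ}, ⟨by simp [countable_univ], fun A _ => ⟨Set.univ, rfl, subset_univ A⟩⟩, ?_⟩
    simp [one_lt_aleph0.le]
  | succ n ih =>
    set α := (ℵ_ (n + 1 : ℕ)).ord.ToType
    have hsucc : ℵ_ (n + 1 : ℕ) = succ (ℵ_ n) := by
      rw [succ_aleph, Nat.cast_succ]
    have hcof : Order.cof α = ℵ_ (n + 1 : ℕ) := by
      rw [Ordinal.cof_toType, hsucc, (isRegular_succ (aleph0_le_aleph n)).cof_ord]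
    have hIio (a : α) : #(Iio a) ≤ ℵ_ n := by
      rw [← lt_succ_iff, ← hsucc]
      simpa [α] using mk_Iio_lt a
    choose S hS hSle using fun a : α => ih (hIio a)
    obtain ⟨f⟩ : Nonempty (X ↪ α) := by rwa [← Cardinal.le_def, mk_ord_toType]
    have hα : ℵ₀ < Order.cof α := by
      rw [hcof, hsucc]
      exact (aleph0_le_aleph n).trans_lt (lt_succ _)
    refine ⟨_, (isCountableCofinal_iUnion_Iio hα hS).preimage f.injective, ?_⟩
    calc #((f ⁻¹' ·) '' ⋃ a, (Subtype.val '' ·) '' S a)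
        ≤ #(⋃ a, (Subtype.val '' ·) '' S a) := mk_image_le
      _ ≤ #α * ℵ_ n := mk_iUnion_le_sum_mk.trans <|
          (sum_le_sum _ _ fun a => mk_image_le.trans (hSle a)).trans_eq (sum_const' _ _)
      _ = ℵ_ (n + 1 : ℕ) := by
          rw [mk_ord_toType, aleph_mul_aleph, max_eq_left (by simp)]

theorem exists_countable_infinite_superset [Infinite X] {A : Set X} (hA : A.Countable) :
    ∃ B : {B : Set X // B.Countable ∧ B.Infinite}, A ⊆ B.1 := by
  let N := range (Infinite.natEmbedding X)
  refine ⟨⟨A ∪ N, hA.union (countable_range _), ?_⟩, subset_union_left⟩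
  exact (infinite_range_of_injective (Infinite.natEmbedding X).injective).mono subset_union_right

theorem ctblCof_le_mk [Infinite X] {S : Set (Set X)} (hS : IsCountableCofinal S) :
    ctblCof X ≤ #S := by
  choose pad hpad using fun B : S => exists_countable_infinite_superset (hS.1 B B.2)
  rw [ctblCof, poCof_eq_cof]
  refine (cof_le (s := range pad) fun A => ?_).trans mk_range_le
  obtain ⟨B, hB, hAB⟩ := hS.2 A.1 A.2.1
  exact ⟨_, mem_range_self ⟨B, hB⟩, hAB.trans (hpad ⟨B, hB⟩)⟩

theorem mk_le_ctblCof (hX : ℵ₀ < #X) : #X ≤ ctblCof X := by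
  have : Infinite X := infinite_iff.2 hX.le
  rw [ctblCof, poCof_eq_cof, le_cof_iff]
  intro S hS
  have hcover : (⋃ A : S, A.1.1) = Set.univ := by
    refine eq_univ_of_forall fun x => ?_
    obtain ⟨A, hxA⟩ := exists_countable_infinite_superset (countable_singleton x)
    obtain ⟨B, hB, hAB⟩ := hS A
    exact mem_iUnion.2 ⟨⟨B, hB⟩, hAB (hxA rfl)⟩
  have hle : #X ≤ #S * ℵ₀ := by
    rw [← mk_univ, ← hcover]
    exact mk_iUnion_le_sum_mk.trans <|
      (sum_le_sum _ _ fun A => A.1.2.1.le_aleph0).trans_eq (sum_const' _ _)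
  by_contra! hS
  exact (hle.trans_lt (mul_lt_of_lt hX.le hS hX)).false

end

/-- `cof([ℵ_n]^ℵ₀) = ℵ_n` for `n ≥ 1`. -/
theorem ctblCof_aleph_nat (n : ℕ) (hn : 1 ≤ n) :
    ctblCof (Quotient.out (Cardinal.aleph n)) = Cardinal.aleph n := by
  have hX : ℵ₀ < #(Quotient.out (ℵ_ n)) := by
    rw [mk_out, ← aleph_zero, aleph_lt_aleph]
    exact_mod_cast hn
  have : Infinite (Quotient.out (ℵ_ n)) := infinite_iff.2 hX.le
  obtain ⟨S, hS, hSle⟩ := exists_isCountableCofinal_mk_le_aleph_nat n (mk_out (ℵ_ n)).le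
  refine le_antisymm ((ctblCof_le_mk hS).trans hSle) ?_
  calc ℵ_ n = #(Quotient.out (ℵ_ n)) := (mk_out _).symm
    _ ≤ _ := mk_le_ctblCof hX
end

section
/- Let 𝒜 ⊆ P(ℕ) be an almost disjoint family. The Isbell–Mrówka space Ψ(𝒜) is star-Hurewicz if and only if: for every function A ↦ f_A from 𝒜 to ℕ^ℕ, there exist finite sets ℱ₁, ℱ₂, … ⊆ 𝒜 such that for every A ∈ 𝒜, (A \ f_A(n)) ∩ ⋃_{B∈ℱ_n}(B \ f_B(n)) ≠ ∅ for all but finitely many n. -/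
open Set Filter

universe u

/-!
Given `f`, cover `Ψ(𝒜)` at stage `n` by the basic neighbourhoods `{B} ∪ (B \ f_B(n))` and the
singletons of the naturals outside all of them. The only member containing `A` is its own basic
neighbourhood, and a member meeting it is another basic neighbourhood, so a finite selection is a
finite set of `B ∈ 𝒜` and `A` is in its star iff `A \ f_A(n)` meets some `B \ f_B(n)` (for
`B = A` because `A` is infinite). Conversely, given open covers, pick a member `U_A(n) ∋ A` and
let `f_A(n)` be so large that `A \ f_A(n) ⊆ U_A(n)`; the naturals are caught by adding, at stage
`n`, a member around each `k ≤ n`.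
-/

theorem mem_starSet_iff {X : Type*} {S : Set X} {𝒰 : Set (Set X)} {x : X} :
    x ∈ starSet S 𝒰 ↔ ∃ U ∈ 𝒰, x ∈ U ∧ (U ∩ S).Nonempty := by
  simp only [starSet, mem_sUnion, mem_ofPred_eq, and_assoc]
  exact exists_congr fun U => and_congr_right fun _ => and_comm

namespace PsiSpace

variable {𝒜 : Set (Set ℕ)}

def basicNbhd (A : 𝒜) (m : ℕ) : Set (PsiSpace 𝒜) :=
  insert (Sum.inr A) (Sum.inl '' ((A : Set ℕ) \ Iio m))

@[simp]
theorem inr_mem_basicNbhd_iff {A B : 𝒜} {m : ℕ} : Sum.inr B ∈ basicNbhd A m ↔ B = A := by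
  simp [basicNbhd]

@[simp]
theorem inl_mem_basicNbhd_iff {A : 𝒜} {m k : ℕ} :
    Sum.inl k ∈ basicNbhd A m ↔ k ∈ (A : Set ℕ) \ Iio m := by
  simp [basicNbhd]

theorem isOpen_basicNbhd (A : 𝒜) (m : ℕ) : IsOpen (basicNbhd A m) := by
  intro B hB
  obtain rfl := inr_mem_basicNbhd_iff.1 hB
  refine (finite_Iio m).subset fun k ⟨hkB, hk⟩ => ?_
  by_contra hkm
  exact hk (inl_mem_basicNbhd_iff.2 ⟨hkB, hkm⟩)

theorem isOpen_singleton_inl (k : ℕ) : IsOpen ({Sum.inl k} : Set (PsiSpace 𝒜)) := by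
  intro B hB
  simp at hB

theorem exists_basicNbhd_subset {U : Set (PsiSpace 𝒜)} {A : 𝒜} (hU : IsOpen U)
    (hA : Sum.inr A ∈ U) : ∃ m, basicNbhd A m ⊆ U := by
  obtain ⟨m, hm⟩ := (hU A hA).bddAbove
  refine ⟨m + 1, ?_⟩
  rintro _ (rfl | ⟨k, ⟨hkA, hkm⟩, rfl⟩)
  · exact hA
  · by_contra hk
    exact hkm (Nat.lt_succ_of_le (hm ⟨hkA, hk⟩))

theorem basicNbhd_inter_nonempty_iff {A B : 𝒜} {m m' : ℕ} (hA : (A : Set ℕ).Infinite) :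
    (basicNbhd A m ∩ basicNbhd B m').Nonempty ↔
      (((A : Set ℕ) \ Iio m) ∩ ((B : Set ℕ) \ Iio m')).Nonempty := by
  constructor
  · rintro ⟨k | C, hkA, hkB⟩
    · exact ⟨k, inl_mem_basicNbhd_iff.1 hkA, inl_mem_basicNbhd_iff.1 hkB⟩
    · obtain rfl := inr_mem_basicNbhd_iff.1 hkA
      obtain rfl := inr_mem_basicNbhd_iff.1 hkB
      obtain ⟨k, hkA, hk⟩ := (hA.sdiff (finite_Iio (max m m'))).nonempty
      exact ⟨k, ⟨hkA, fun h => hk (mem_Iio.2 (lt_max_of_lt_left h))⟩,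
        hkA, fun h => hk (mem_Iio.2 (lt_max_of_lt_right h))⟩
  · rintro ⟨k, hkA, hkB⟩
    exact ⟨Sum.inl k, inl_mem_basicNbhd_iff.2 hkA, inl_mem_basicNbhd_iff.2 hkB⟩

def basicCover (m : 𝒜 → ℕ) : Set (Set (PsiSpace 𝒜)) :=
  range (fun B => basicNbhd B (m B)) ∪
    (fun k => {Sum.inl k}) '' (⋃ B : 𝒜, (B : Set ℕ) \ Iio (m B))ᶜ

theorem isOpen_of_mem_basicCover {m : 𝒜 → ℕ} {U : Set (PsiSpace 𝒜)} (hU : U ∈ basicCover m) :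
    IsOpen U := by
  rcases hU with ⟨B, rfl⟩ | ⟨k, -, rfl⟩
  exacts [isOpen_basicNbhd B (m B), isOpen_singleton_inl k]

theorem sUnion_basicCover (m : 𝒜 → ℕ) : ⋃₀ basicCover m = univ := by
  refine eq_univ_of_forall ?_
  rintro (k | B)
  · by_cases hk : k ∈ ⋃ B : 𝒜, (B : Set ℕ) \ Iio (m B)
    · obtain ⟨B, hkB⟩ := mem_iUnion.1 hk
      exact ⟨_, Or.inl ⟨B, rfl⟩, inl_mem_basicNbhd_iff.2 hkB⟩
    · exact ⟨_, Or.inr ⟨k, hk, rfl⟩, rfl⟩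
  · exact ⟨_, Or.inl ⟨B, rfl⟩, inr_mem_basicNbhd_iff.2 rfl⟩

theorem exists_basicNbhd_mem_of_inr_mem_starSet {m : 𝒜 → ℕ} {ℱ : Set (Set (PsiSpace 𝒜))}
    (hℱ : ℱ ⊆ basicCover m) {A : 𝒜} (hA : Sum.inr A ∈ starSet (⋃₀ ℱ) (basicCover m)) :
    ∃ B, basicNbhd B (m B) ∈ ℱ ∧ (basicNbhd A (m A) ∩ basicNbhd B (m B)).Nonempty := by
  obtain ⟨U, hU, hAU, x, hxU, W, hWℱ, hxW⟩ := mem_starSet_iff.1 hA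
  obtain rfl : U = basicNbhd A (m A) := by
    rcases hU with ⟨B, rfl⟩ | ⟨k, -, rfl⟩
    · rw [inr_mem_basicNbhd_iff.1 hAU]
    · simp at hAU
  rcases hℱ hWℱ with ⟨B, rfl⟩ | ⟨k, hk, rfl⟩
  · exact ⟨B, hWℱ, x, hxU, hxW⟩
  · obtain rfl := mem_singleton_iff.1 hxW
    exact absurd (mem_iUnion.2 ⟨A, inl_mem_basicNbhd_iff.1 hxU⟩) hk

theorem exists_finset_inter_nonempty_of_starHurewicz (h : StarHurewicz (PsiSpace 𝒜))
    (hinf : ∀ A : 𝒜, (A : Set ℕ).Infinite) (f : 𝒜 → ℕ → ℕ) :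
    ∃ ℱ : ℕ → Finset 𝒜, ∀ A : 𝒜, ∀ᶠ n in atTop,
      (((A : Set ℕ) \ Iio (f A n)) ∩ ⋃ B ∈ ℱ n, ((B : Set ℕ) \ Iio (f B n))).Nonempty := by
  obtain ⟨ℱ, hℱ, hstar⟩ := h (fun n => basicCover (f · n))
    (fun n _ => isOpen_of_mem_basicCover) (fun n => sUnion_basicCover _)
  have hfin : ∀ n, {B : 𝒜 | basicNbhd B (f B n) ∈ ℱ n}.Finite := fun n =>
    (hℱ n).2.preimage fun B _ C _ hBC => by
      simpa using (hBC ▸ inr_mem_basicNbhd_iff.2 rfl : Sum.inr B ∈ basicNbhd C (f C n))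
  refine ⟨fun n => (hfin n).toFinset, fun A => (hstar (Sum.inr A)).mono fun n hn => ?_⟩
  obtain ⟨B, hBℱ, hAB⟩ := exists_basicNbhd_mem_of_inr_mem_starSet (hℱ n).1 hn
  obtain ⟨k, hkA, hkB⟩ := (basicNbhd_inter_nonempty_iff (hinf A)).1 hAB
  exact ⟨k, hkA, mem_biUnion ((hfin n).mem_toFinset.2 hBℱ) hkB⟩

theorem starHurewicz_of_exists_finset_inter_nonempty
    (h : ∀ f : 𝒜 → ℕ → ℕ, ∃ ℱ : ℕ → Finset 𝒜, ∀ A : 𝒜, ∀ᶠ n in atTop,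
      (((A : Set ℕ) \ Iio (f A n)) ∩ ⋃ B ∈ ℱ n, ((B : Set ℕ) \ Iio (f B n))).Nonempty) :
    StarHurewicz (PsiSpace 𝒜) := by
  intro 𝒰 hopen hcov
  have hmem : ∀ n (x : PsiSpace 𝒜), ∃ U ∈ 𝒰 n, x ∈ U := fun n x =>
    mem_sUnion.1 ((hcov n).symm ▸ mem_univ x)
  choose U hU𝒰 hxU using hmem
  choose f hf using fun A n => exists_basicNbhd_subset (hopen n _ (hU𝒰 n _)) (hxU n (.inr A))
  obtain ⟨ℱ, hℱ⟩ := h f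
  refine ⟨fun n => (fun B => U n (.inr B)) '' ℱ n ∪ (fun k => U n (.inl k)) '' Iic n,
    fun n => ⟨?_, ?_⟩, ?_⟩
  · rintro _ (⟨B, -, rfl⟩ | ⟨k, -, rfl⟩) <;> exact hU𝒰 n _
  · exact ((ℱ n).finite_toSet.image _).union ((finite_Iic n).image _)
  rintro (k | A)
  · filter_upwards [eventually_ge_atTop k] with n hkn
    exact mem_starSet_iff.2 ⟨_, hU𝒰 n _, hxU n _, _, hxU n _,
      mem_sUnion_of_mem (hxU n _) (Or.inr ⟨k, hkn, rfl⟩)⟩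
  · filter_upwards [hℱ A] with n ⟨k, hkA, hkℱ⟩
    obtain ⟨B, hB, hkB⟩ := mem_iUnion₂.1 hkℱ
    exact mem_starSet_iff.2 ⟨_, hU𝒰 n _, hxU n _, Sum.inl k, hf A n (inl_mem_basicNbhd_iff.2 hkA),
      mem_sUnion_of_mem (hf B n (inl_mem_basicNbhd_iff.2 hkB)) (Or.inl ⟨B, hB, rfl⟩)⟩

end PsiSpace

/-- combinatorial characterization of star-Hurewicz Ψ-spaces. -/
theorem starHurewicz_psiSpace_iff (𝒜 : Set (Set ℕ)) (had : AlmostDisjoint 𝒜) :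
    StarHurewicz (PsiSpace 𝒜) ↔
      ∀ f : 𝒜 → ℕ → ℕ, ∃ ℱ : ℕ → Finset 𝒜, ∀ A : 𝒜,
        ∀ᶠ n in atTop,
          (((A : Set ℕ) \ Set.Iio (f A n)) ∩
            ⋃ B ∈ ℱ n, ((B : Set ℕ) \ Set.Iio (f B n))).Nonempty :=
  ⟨fun h => PsiSpace.exists_finset_inter_nonempty_of_starHurewicz h fun A => had.1 A A.2,
    PsiSpace.starHurewicz_of_exists_finset_inter_nonempty⟩
end
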